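/- arXiv:math/0204116 — 5 statements merged into one kernel-verified Lean document; each statement's English description precedes it below -/
import Mathlib

section
/- Let κ be a cardinal. If κ < 𝔭, then in every σ-centered locally compact sober topological space the intersection of any family of at most κ dense open sets is nonempty. -/
/-- A topological space is ccc if any uncountable collection of nonempty open sets
has two distinct members with nonempty intersection. -/
def CCCSpace (X : Type) [TopologicalSpace X] : Prop :=
  ∀ 𝒞 : Set (Set X), (∀ U ∈ 𝒞, IsOpen U ∧ U.Nonempty) → ¬ 𝒞.Countable →
    ∃ U ∈ 𝒞, ∃ V ∈ 𝒞, U ≠ V ∧ (U ∩ V).Nonempty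

/-- A space is locally compact if every open set contains a compact neighborhood
of each of its points. -/
def LocCompactSp (X : Type) [TopologicalSpace X] : Prop :=
  ∀ O : Set X, IsOpen O → ∀ x ∈ O,
    ∃ K U : Set X, IsCompact K ∧ IsOpen U ∧ x ∈ U ∧ U ⊆ K ∧ K ⊆ O

/-- A subset is irreducible if it is closed, nonempty, and is not the union of
two proper closed subsets. -/
def IrredSet {X : Type} [TopologicalSpace X] (C : Set X) : Prop :=
  IsClosed C ∧ C.Nonempty ∧
    ∀ A B : Set X, IsClosed A → IsClosed B → C = A ∪ B → C = A ∨ C = B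

/-- A space is sober if it is T0 and every irreducible subset is the closure of a point. -/
def SoberSp (X : Type) [TopologicalSpace X] : Prop :=
  T0Space X ∧ ∀ C : Set X, IrredSet C → ∃ x : X, C = closure {x}

/-- `U` is compact in `V` if every open cover of `V` has a finite subcollection covering `U`. -/
def CompactIn {X : Type} [TopologicalSpace X] (U V : Set X) : Prop :=
  ∀ 𝒞 : Set (Set X), (∀ W ∈ 𝒞, IsOpen W) → V ⊆ ⋃₀ 𝒞 →
    ∃ 𝒻 : Set (Set X), 𝒻 ⊆ 𝒞 ∧ 𝒻.Finite ∧ U ⊆ ⋃₀ 𝒻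

/-- A space is core compact if every open set `O` is the union of the open sets
`O'` with `O'` compact in `O`. -/
def CoreCompact (X : Type) [TopologicalSpace X] : Prop :=
  ∀ O : Set X, IsOpen O → O = ⋃₀ {O' : Set X | IsOpen O' ∧ CompactIn O' O}

/-- A space is supersober if it is T0 and every ultrafilter has either the empty set
or the closure of a point as its set of limits. -/
def SuperSober (X : Type) [TopologicalSpace X] : Prop :=
  T0Space X ∧ ∀ F : Ultrafilter X,
    {x : X | (F : Filter X) ≤ nhds x} = (∅ : Set X) ∨
      ∃ y : X, {x : X | (F : Filter X) ≤ nhds x} = closure {y}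

/-- A poset is upwards-ccc if any uncountable subset has two distinct members with
a common upper bound. -/
def UpCCC (P : Type) [PartialOrder P] : Prop :=
  ∀ S : Set P, ¬ S.Countable → ∃ x ∈ S, ∃ y ∈ S, x ≠ y ∧ ∃ z : P, x ≤ z ∧ y ≤ z

/-- A subset of a poset is cofinal if every element of the poset is below some element of it. -/
def IsCofinalIn {P : Type} [PartialOrder P] (d : Set P) : Prop :=
  ∀ p : P, ∃ q ∈ d, p ≤ q

/-- A subset `R` of a poset is upwards-centered if every finite subset of `R`
has an upper bound in the poset. -/
def UpCentered {P : Type} [PartialOrder P] (R : Set P) : Prop :=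
  ∀ F : Set P, F ⊆ R → F.Finite → ∃ z : P, ∀ x ∈ F, x ≤ z

/-- A poset is upwards-σ-centered if it is the union of countably many
upwards-centered subsets. -/
def UpSigmaCentered (P : Type) [PartialOrder P] : Prop :=
  ∃ C : ℕ → Set P, (∀ n, UpCentered (C n)) ∧ (⋃ n, C n) = Set.univ

/-- Witness for the defining property of the cardinal 𝔪 at cardinal `κ`:
there are a nonempty upwards-ccc poset `P` and κ cofinal subsets of `P`
such that no upwards-directed subset of `P` meets every one of them. -/
def MWitness (κ : Cardinal) : Prop :=
  ∃ (P : Type) (inst : PartialOrder P), Nonempty P ∧ @UpCCC P inst ∧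
    ∃ D : Set (Set P), Cardinal.mk ↥D = κ ∧ (∀ d ∈ D, @IsCofinalIn P inst d) ∧
      ¬ ∃ S : Set P, DirectedOn inst.le S ∧ ∀ d ∈ D, (S ∩ d).Nonempty

/-- The cardinal 𝔪, the least cardinal admitting an `MWitness`. -/
noncomputable def cardM : Cardinal := sInf {κ : Cardinal | MWitness κ}

/-- Witness for the defining property of the cardinal 𝔭 at cardinal `κ`:
there are a nonempty upwards-σ-centered poset `P` and κ cofinal subsets of `P`
such that no upwards-directed subset of `P` meets every one of them. -/
def PWitness (κ : Cardinal) : Prop :=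
  ∃ (P : Type) (inst : PartialOrder P), Nonempty P ∧ @UpSigmaCentered P inst ∧
    ∃ D : Set (Set P), Cardinal.mk ↥D = κ ∧ (∀ d ∈ D, @IsCofinalIn P inst d) ∧
      ¬ ∃ S : Set P, DirectedOn inst.le S ∧ ∀ d ∈ D, (S ∩ d).Nonempty

/-- The cardinal 𝔭, the least cardinal admitting a `PWitness`. -/
noncomputable def cardP : Cardinal := sInf {κ : Cardinal | PWitness κ}

/-- The nonempty open subsets of a space. -/
def NonemptyOpens (X : Type) [TopologicalSpace X] : Type :=
  {U : Set X // IsOpen U ∧ U.Nonempty}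

/-- The nonempty open sets, partially ordered by reverse inclusion. -/
instance {X : Type} [TopologicalSpace X] : PartialOrder (NonemptyOpens X) where
  le U V := V.1 ⊆ U.1
  le_refl U := subset_rfl
  le_trans a b c h₁ h₂ := Set.Subset.trans h₂ h₁
  le_antisymm a b h₁ h₂ := Subtype.ext (Set.Subset.antisymm h₂ h₁)

/-- A space is σ-centered if its poset of nonempty open sets under reverse inclusion
is upwards-σ-centered. -/
def SigmaCenteredSpace (X : Type) [TopologicalSpace X] : Prop :=
  UpSigmaCentered (NonemptyOpens X)

/-- `x` is way below `y` if for every directed set `D`, `y ≤ sSup D` implies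
`x ≤ d` for some `d ∈ D`. -/
def WayBelow {L : Type} [CompleteLattice L] (x y : L) : Prop :=
  ∀ D : Set L, D.Nonempty → DirectedOn (· ≤ ·) D → y ≤ sSup D → ∃ d ∈ D, x ≤ d

/-- A complete lattice is upwards-continuous if for every `y` the set of elements
way below `y` is directed with supremum `y`. -/
def UpContinuousLat (L : Type) [CompleteLattice L] : Prop :=
  ∀ y : L, DirectedOn (· ≤ ·) {x : L | WayBelow x y} ∧ sSup {x : L | WayBelow x y} = y

/-- A lattice is distributive if it satisfies both distributive laws. -/
def DistribLat (L : Type) [CompleteLattice L] : Prop :=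
  ∀ a b c : L, a ⊓ (b ⊔ c) = (a ⊓ b) ⊔ (a ⊓ c) ∧ a ⊔ (b ⊓ c) = (a ⊔ b) ⊓ (a ⊔ c)

/-- A complete lattice is downwards-ccc if any uncountable subset has two distinct
members whose meet is not `⊥`. -/
def DownCCC (L : Type) [CompleteLattice L] : Prop :=
  ∀ S : Set L, ¬ S.Countable → ∃ x ∈ S, ∃ y ∈ S, x ≠ y ∧ x ⊓ y ≠ ⊥

/-- The nonbottom elements of a complete lattice. -/
def NonBot (L : Type) [CompleteLattice L] : Type := {x : L // x ≠ ⊥}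

/-- The nonbottom elements of a complete lattice, with the order reversed. -/
instance {L : Type} [CompleteLattice L] : PartialOrder (NonBot L) where
  le a b := b.1 ≤ a.1
  le_refl a := le_refl _
  le_trans a b c h₁ h₂ := le_trans h₂ h₁
  le_antisymm a b h₁ h₂ := Subtype.ext (le_antisymm h₂ h₁)

/-- A complete lattice is downwards-σ-centered if its set of nonbottom elements,
with the order reversed, is upwards-σ-centered. -/
def DownSigmaCentered (L : Type) [CompleteLattice L] : Prop :=
  UpSigmaCentered (NonBot L)

/-- An element `x` is a non-zero divisor if `x ⊓ y ≠ ⊥` for every `y ≠ ⊥`. -/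
def IsNZDiv {L : Type} [CompleteLattice L] (x : L) : Prop :=
  ∀ y : L, y ≠ ⊥ → x ⊓ y ≠ ⊥

/-- An element `p` is irreducible if `p = a ⊓ b` implies `p = a` or `p = b`. -/
def IrredElem {L : Type} [CompleteLattice L] (p : L) : Prop :=
  ∀ a b : L, p = a ⊓ b → p = a ∨ p = b
/-- Auxiliary poset: pairs of a nonempty open set and a compact set containing it. -/
structure CPair (X : Type) [TopologicalSpace X] where
  U : Set X
  K : Set X
  opn : IsOpen U
  ne : U.Nonempty
  cpt : IsCompact K
  sub : U ⊆ K

namespace CPair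

variable {X : Type} [TopologicalSpace X]

theorem ext' {p q : CPair X} (h1 : p.U = q.U) (h2 : p.K = q.K) : p = q := by
  cases p; cases q; cases h1; cases h2; rfl

instance : PartialOrder (CPair X) where
  le p q := p = q ∨ q.K ⊆ p.U
  le_refl p := Or.inl rfl
  le_trans p q r hpq hqr := by
    rcases hpq with rfl | h1
    · exact hqr
    · rcases hqr with rfl | h2
      · exact Or.inr h1
      · exact Or.inr (h2.trans (q.sub.trans h1))
  le_antisymm p q h1 h2 := by
    rcases h1 with rfl | h1
    · rfl
    rcases h2 with rfl | h2
    · rfl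
    exact ext' (Set.Subset.antisymm (p.sub.trans h2) (q.sub.trans h1))
      (Set.Subset.antisymm (h2.trans q.sub) (h1.trans p.sub))

theorem le_def {p q : CPair X} : p ≤ q ↔ (p = q ∨ q.K ⊆ p.U) := Iff.rfl

theorem k_sub_of_le {p q : CPair X} (h : p ≤ q) : q.K ⊆ p.K := by
  rcases h with rfl | h
  · exact subset_rfl
  · exact h.trans p.sub

end CPair

/-- Reinterpret a nonempty open as a subtype element. -/
def noSub {X : Type} [TopologicalSpace X] (z : NonemptyOpens X) :
    {U : Set X // IsOpen U ∧ U.Nonempty} := z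

/-- If κ < 𝔭, then in every σ-centered locally compact sober space the
intersection of any family of at most κ dense open sets is nonempty. -/
theorem statement6 (κ : Cardinal) (hκ : κ < cardP)
    (X : Type) [TopologicalSpace X]
    (hsc : SigmaCenteredSpace X) (hlc : LocCompactSp X) (hsob : SoberSp X)
    (𝒟 : Set (Set X)) (hcard : Cardinal.mk ↥𝒟 ≤ κ)
    (hdo : ∀ O ∈ 𝒟, IsOpen O ∧ Dense O) :
    (⋂₀ 𝒟).Nonempty := by
  classical
  obtain ⟨C, hC, hCu⟩ := hsc
  -- X is nonempty
  obtain ⟨z0, -⟩ := hC 0 ∅ (Set.empty_subset _) Set.finite_empty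
  have z0' : {U : Set X // IsOpen U ∧ U.Nonempty} := z0
  obtain ⟨x0, hx0⟩ := z0'.2.2
  -- trivial case: 𝒟 empty
  rcases Set.eq_empty_or_nonempty 𝒟 with rfl | ⟨O₀, hO₀⟩
  · exact ⟨x0, by simp⟩
  -- the poset of compact pairs is nonempty
  obtain ⟨K0, U0, hK0, hU0, hxU0, hUK0, -⟩ := hlc Set.univ isOpen_univ x0 (Set.mem_univ x0)
  have hPne : Nonempty (CPair X) := ⟨⟨U0, K0, hU0, ⟨x0, hxU0⟩, hK0, hUK0⟩⟩
  -- the poset of compact pairs is σ-centered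
  have hσ : UpSigmaCentered (CPair X) := by
    refine ⟨fun n => (fun p : CPair X =>
        (⟨p.U, p.opn, p.ne⟩ : {U : Set X // IsOpen U ∧ U.Nonempty})) ⁻¹' (C n), ?_, ?_⟩
    · intro n F hF hFfin
      obtain ⟨z, hz⟩ := hC n ((fun p : CPair X =>
          (⟨p.U, p.opn, p.ne⟩ : {U : Set X // IsOpen U ∧ U.Nonempty})) '' F)
        (Set.image_subset_iff.mpr hF) (hFfin.image _)
      obtain ⟨x, hx⟩ := (noSub z).2.2
      obtain ⟨K, V, hK, hV, hxV, hVK, hKz⟩ := hlc (noSub z).1 (noSub z).2.1 x hx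
      refine ⟨⟨V, K, hV, ⟨x, hxV⟩, hK, hVK⟩, fun p hp => Or.inr ?_⟩
      have hzp : (noSub z).1 ⊆ p.U := hz _ ⟨p, hp, rfl⟩
      exact hKz.trans hzp
    · ext p
      simp only [Set.mem_iUnion, Set.mem_univ, iff_true, Set.mem_preimage]
      have : (⟨p.U, p.opn, p.ne⟩ : {U : Set X // IsOpen U ∧ U.Nonempty}) ∈ ⋃ n, C n := by
        rw [hCu]; trivial
      obtain ⟨i, hi⟩ := Set.mem_iUnion.mp this
      exact ⟨i, hi⟩
  -- the cofinal sets
  set dO : Set X → Set (CPair X) := fun O => {p : CPair X | p.K ⊆ O} with hdO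
  have hcof : ∀ d ∈ dO '' 𝒟, IsCofinalIn d := by
    rintro d ⟨O, hO, rfl⟩ q
    obtain ⟨hOop, hOd⟩ := hdo O hO
    obtain ⟨x, hx⟩ := hOd.inter_open_nonempty q.U q.opn q.ne
    obtain ⟨K, V, hK, hV, hxV, hVK, hKsub⟩ := hlc (q.U ∩ O) (q.opn.inter hOop) x hx
    refine ⟨⟨V, K, hV, ⟨x, hxV⟩, hK, hVK⟩, ?_, Or.inr ?_⟩
    · exact hKsub.trans Set.inter_subset_right
    · exact hKsub.trans Set.inter_subset_left
  -- the cardinal of the family of cofinal sets is below 𝔭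
  have hlt : Cardinal.mk ↥(dO '' 𝒟) < cardP :=
    lt_of_le_of_lt (le_trans Cardinal.mk_image_le hcard) hκ
  have hnp : ¬ PWitness (Cardinal.mk ↥(dO '' 𝒟)) := fun h =>
    absurd (csInf_le' (show Cardinal.mk ↥(dO '' 𝒟) ∈ {κ : Cardinal | PWitness κ} from h))
      (not_le.mpr hlt)
  -- apply the definition of 𝔭 to get a directed set meeting all cofinal sets
  have hex : ∃ S : Set (CPair X), DirectedOn (· ≤ ·) S ∧
      ∀ d ∈ dO '' 𝒟, (S ∩ d).Nonempty := by
    by_contra hS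
    exact hnp ⟨CPair X, inferInstance, hPne, hσ, dO '' 𝒟, rfl, hcof, hS⟩
  obtain ⟨S, hdir, hmeet⟩ := hex
  -- Zorn: a maximal open set V containing no compact K_p for p ∈ S
  set 𝒜 : Set (Set X) := {V | IsOpen V ∧ ¬∃ p ∈ S, p.K ⊆ V} with h𝒜
  obtain ⟨V, hV⟩ := zorn_subset 𝒜 (by
    intro c hc hchain
    rcases Set.eq_empty_or_nonempty c with rfl | hcne
    · exact ⟨∅, ⟨isOpen_empty, fun ⟨p, _, hpK⟩ =>
        (p.ne.mono (p.sub.trans hpK)).ne_empty rfl⟩, by simp⟩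
    refine ⟨⋃₀ c, ⟨isOpen_sUnion fun W hW => (hc hW).1, ?_⟩, fun s hs => Set.subset_sUnion_of_mem hs⟩
    rintro ⟨p, hpS, hpK⟩
    have : Nonempty ↥c := hcne.to_subtype
    obtain ⟨⟨W, hWc⟩, hW⟩ := p.cpt.elim_directed_cover (fun i : ↥c => i.1)
      (fun i => (hc i.2).1) (by rwa [← Set.sUnion_eq_iUnion])
      (fun i j => by
        rcases eq_or_ne i.1 j.1 with h | h
        · exact ⟨j, h.le, subset_rfl⟩
        · rcases hchain i.2 j.2 h with h' | h'
          · exact ⟨j, h', subset_rfl⟩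
          · exact ⟨i, subset_rfl, h'⟩)
    exact (hc hWc).2 ⟨p, hpS, hW⟩)
  have hVopen : IsOpen V := hV.prop.1
  have hVno : ¬∃ p ∈ S, p.K ⊆ V := hV.prop.2
  -- S is nonempty
  obtain ⟨p₀, hp₀S, hp₀K⟩ := hmeet (dO O₀) ⟨O₀, hO₀, rfl⟩
  -- Vᶜ is irreducible
  have hirr : IrredSet Vᶜ := by
    refine ⟨hVopen.isClosed_compl, Set.nonempty_compl.mpr ?_, ?_⟩
    · rintro rfl
      exact hVno ⟨p₀, hp₀S, Set.subset_univ _⟩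
    · intro A B hA hB hEq
      by_cases hCA : Vᶜ = A
      · exact Or.inl hCA
      by_cases hCB : Vᶜ = B
      · exact Or.inr hCB
      exfalso
      have hgetp : ∀ T : Set X, IsClosed T → Vᶜ ≠ T → T ⊆ Vᶜ → ∃ p ∈ S, p.K ⊆ Tᶜ := by
        intro T hT hne hsub
        have hVT : V ⊆ Tᶜ := Set.subset_compl_comm.mp hsub
        have hneq : V ≠ Tᶜ := fun h => hne (by rw [h, compl_compl])
        by_contra hcon
        have : Tᶜ ∈ 𝒜 := ⟨hT.isOpen_compl, hcon⟩
        exact hneq (Set.Subset.antisymm hVT (hV.2 this hVT))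
      obtain ⟨p, hpS, hpA⟩ := hgetp A hA hCA (hEq ▸ Set.subset_union_left)
      obtain ⟨q, hqS, hqB⟩ := hgetp B hB hCB (hEq ▸ Set.subset_union_right)
      obtain ⟨r, hrS, hpr, hqr⟩ := hdir p hpS q hqS
      refine hVno ⟨r, hrS, ?_⟩
      have h1 : r.K ⊆ Aᶜ := (CPair.k_sub_of_le hpr).trans hpA
      have h2 : r.K ⊆ Bᶜ := (CPair.k_sub_of_le hqr).trans hqB
      have : r.K ⊆ (A ∪ B)ᶜ := by
        rw [Set.compl_union]; exact Set.subset_inter h1 h2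
      rwa [← hEq, compl_compl] at this
  -- soberness gives a generic point
  obtain ⟨y, hy⟩ := hsob.2 Vᶜ hirr
  refine ⟨y, fun O hO => ?_⟩
  obtain ⟨p, hpS, hpK⟩ := hmeet (dO O) ⟨O, hO, rfl⟩
  by_contra hyO
  have h1 : closure {y} ⊆ Oᶜ :=
    closure_minimal (Set.singleton_subset_iff.mpr hyO) (hdo O hO).1.isClosed_compl
  have h2 : O ⊆ V := by
    rw [← compl_compl O]
    exact Set.compl_subset_compl.mpr (hy ▸ h1 : Vᶜ ⊆ Oᶜ) |>.trans_eq (compl_compl V)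
  exact hVno ⟨p, hpS, hpK.trans h2⟩
end

section
/- Let κ be a cardinal. Suppose that in every σ-centered locally compact sober space the intersection of any family of at most κ dense open sets is nonempty. Then for every downwards-σ-centered upwards-continuous distributive complete lattice L and every set D of at most κ non-zero divisors of L, there is an irreducible element p ∈ L such that no element of D is below p. -/
namespace S7

variable {L : Type} [CompleteLattice L]

/-- Prime element: `a ⊓ b ≤ p` implies `a ≤ p` or `b ≤ p`. -/
def IsPrime (p : L) : Prop := ∀ a b : L, a ⊓ b ≤ p → a ≤ p ∨ b ≤ p

lemma wayBelow_le {x y : L} (h : WayBelow x y) : x ≤ y := by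
  obtain ⟨d, hd, hxd⟩ := h {y} ⟨y, rfl⟩
    (fun a ha b hb => ⟨y, rfl, by simp_all, by simp_all⟩) (by simp)
  simp only [Set.mem_singleton_iff] at hd
  exact hd ▸ hxd

lemma le_wayBelow {x v m : L} (hxv : x ≤ v) (h : WayBelow v m) : WayBelow x m :=
  fun D hne hdir hm => by
    obtain ⟨d, hd, hvd⟩ := h D hne hdir hm
    exact ⟨d, hd, hxv.trans hvd⟩

lemma wayBelow_le' {v m m' : L} (h : WayBelow v m) (hmm : m ≤ m') : WayBelow v m' :=
  fun D hne hdir hm => h D hne hdir (hmm.trans hm)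

lemma bot_wayBelow (z : L) : WayBelow (⊥ : L) z :=
  fun D hne _ _ => ⟨hne.choose, hne.choose_spec, bot_le⟩

lemma interp (hcont : UpContinuousLat L) {x z : L} (h : WayBelow x z) :
    ∃ m, WayBelow x m ∧ WayBelow m z := by
  set D : Set L := {v | ∃ m, WayBelow v m ∧ WayBelow m z} with hD
  have hne : D.Nonempty := ⟨⊥, ⊥, bot_wayBelow _, bot_wayBelow _⟩
  have hdir : DirectedOn (· ≤ ·) D := by
    rintro a ⟨m1, ham1, hm1z⟩ b ⟨m2, hbm2, hm2z⟩
    obtain ⟨m3, hm3z, hm13, hm23⟩ := (hcont z).1 m1 hm1z m2 hm2z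
    obtain ⟨v3, hv3, hav3, hbv3⟩ := (hcont m3).1 a (wayBelow_le' ham1 hm13) b (wayBelow_le' hbm2 hm23)
    exact ⟨v3, ⟨m3, hv3, hm3z⟩, hav3, hbv3⟩
  have hsup : z ≤ sSup D := by
    conv_lhs => rw [← (hcont z).2]
    refine sSup_le fun m hm => ?_
    rw [← (hcont m).2]
    exact sSup_le fun v hv => le_sSup ⟨m, hv, hm⟩
  obtain ⟨v, ⟨m, hvm, hmz⟩, hxv⟩ := h D hne hdir hsup
  exact ⟨m, le_wayBelow hxv hvm, hmz⟩

lemma exists_seq (P : L → Prop) (y : L) (hy : P y)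
    (step : ∀ v, P v → ∃ m, WayBelow m v ∧ P m) :
    ∃ u : ℕ → L, u 0 = y ∧ (∀ n, P (u n)) ∧ ∀ n, WayBelow (u (n+1)) (u n) := by
  choose f hf1 hf2 using step
  let g : {v : L // P v} → {v : L // P v} := fun v => ⟨f v.1 v.2, hf2 _ _⟩
  let u : ℕ → {v : L // P v} := fun n => g^[n] ⟨y, hy⟩
  refine ⟨fun n => (u n).1, rfl, fun n => (u n).2, fun n => ?_⟩
  have hstep : u (n+1) = g (u n) := Function.iterate_succ_apply' g n _
  show WayBelow (u (n+1)).1 (u n).1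
  rw [hstep]
  exact hf1 _ _

lemma prime_of_chain (hdist : DistribLat L) (u : ℕ → L)
    (hwb : ∀ n, WayBelow (u (n+1)) (u n)) {c : L} (hc : ∀ n, ¬ u n ≤ c) :
    ∃ p : L, IsPrime p ∧ p ≠ ⊤ ∧ c ≤ p ∧ ∀ n, ¬ u n ≤ p := by
  have hanti : ∀ n m, n ≤ m → u m ≤ u n :=
    fun n m hnm => antitone_nat_of_succ_le (fun k => wayBelow_le (hwb k)) hnm
  set F : Set L := {v | ∃ n, u n ≤ v} with hF
  have hFscott : ∀ T : Set L, T.Nonempty → DirectedOn (· ≤ ·) T → sSup T ∈ F →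
      ∃ t ∈ T, t ∈ F := by
    rintro T hTne hTdir ⟨n, hn⟩
    obtain ⟨t, ht, hut⟩ := hwb n T hTne hTdir hn
    exact ⟨t, ht, n+1, hut⟩
  have hcS : c ∈ {z : L | c ≤ z ∧ z ∉ F} := ⟨le_rfl, fun ⟨n, hn⟩ => hc n hn⟩
  obtain ⟨p, hcple, hpmax⟩ := zorn_le_nonempty₀ {z : L | c ≤ z ∧ z ∉ F}
    (fun T hTs hTchain y hyT =>
      ⟨sSup T, ⟨(hTs hyT).1.trans (le_sSup hyT), fun hsup => by
        obtain ⟨t, htT, htF⟩ := hFscott T ⟨y, hyT⟩ hTchain.directedOn hsup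
        exact (hTs htT).2 htF⟩, fun z hz => le_sSup hz⟩) c hcS
  have hpF : p ∉ F := hpmax.1.2
  have hcp : c ≤ p := hpmax.1.1
  have hmemsup : ∀ x : L, ¬ x ≤ p → p ⊔ x ∈ F := by
    intro x hx
    by_contra hxF
    have hle : p ⊔ x ≤ p := hpmax.2 ⟨hcp.trans le_sup_left, hxF⟩ le_sup_left
    exact hx (le_sup_right.trans hle)
  have hprime : IsPrime p := by
    intro a b hab
    by_contra hcon
    push_neg at hcon
    obtain ⟨n, hn⟩ := hmemsup a hcon.1
    obtain ⟨m, hm⟩ := hmemsup b hcon.2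
    have hnm : u (max n m) ≤ (p ⊔ a) ⊓ (p ⊔ b) :=
      le_inf ((hanti n _ (le_max_left n m)).trans hn)
        ((hanti m _ (le_max_right n m)).trans hm)
    rw [← (hdist p a b).2, sup_eq_left.2 hab] at hnm
    exact hpF ⟨_, hnm⟩
  have hptop : p ≠ ⊤ := fun he => hpF ⟨0, he ▸ le_top⟩
  exact ⟨p, hprime, hptop, hcp, fun n hn => hpF ⟨n, hn⟩⟩

lemma exists_prime_sep (hcont : UpContinuousLat L) (hdist : DistribLat L) {x y : L}
    (hxy : ¬ x ≤ y) : ∃ p : L, IsPrime p ∧ p ≠ ⊤ ∧ y ≤ p ∧ ¬ x ≤ p := by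
  have step : ∀ v : L, ¬ v ≤ y → ∃ m, WayBelow m v ∧ ¬ m ≤ y := by
    intro v hv
    by_contra hcon
    push_neg at hcon
    exact hv (by rw [← (hcont v).2]; exact sSup_le fun m hm => hcon m hm)
  obtain ⟨u, hu0, huP, huwb⟩ := exists_seq (fun v => ¬ v ≤ y) x hxy step
  obtain ⟨p, hp, hpt, hyp, hnp⟩ := prime_of_chain hdist u huwb huP
  exact ⟨p, hp, hpt, hyp, fun hxp => hnp 0 (by rw [hu0]; exact hxp)⟩

/-- The prime spectrum of `L`. -/
def Pt (L : Type) [CompleteLattice L] : Type := {p : L // IsPrime p ∧ p ≠ ⊤}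

/-- Basic (in fact all) open sets of the spectrum. -/
def Ob (x : L) : Set (Pt L) := {q | ¬ x ≤ q.1}

lemma Ob_inf (x y : L) : Ob (x ⊓ y) = Ob x ∩ Ob y := by
  ext q
  constructor
  · intro hq
    exact ⟨fun hx => hq (le_trans inf_le_left hx), fun hy => hq (le_trans inf_le_right hy)⟩
  · rintro ⟨hx, hy⟩ hle
    rcases q.2.1 x y hle with h' | h'
    exacts [hx h', hy h']

instance : TopologicalSpace (Pt L) where
  IsOpen V := ∃ x : L, V = Ob x
  isOpen_univ := ⟨⊤, by
    ext q
    simp only [Set.mem_univ, true_iff, Ob, Set.mem_setOf_eq, top_le_iff]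
    exact q.2.2⟩
  isOpen_inter := by
    rintro V W ⟨x, rfl⟩ ⟨y, rfl⟩
    exact ⟨x ⊓ y, (Ob_inf x y).symm⟩
  isOpen_sUnion := by
    intro S hS
    refine ⟨sSup {x : L | Ob x ∈ S}, ?_⟩
    ext q
    constructor
    · rintro ⟨V, hVS, hqV⟩
      obtain ⟨x, rfl⟩ := hS V hVS
      intro hle
      exact hqV (le_trans (le_sSup (show x ∈ {x : L | Ob x ∈ S} from hVS)) hle)
    · intro hq
      by_contra hcon
      apply hq
      apply sSup_le
      intro x hx
      by_contra hxq
      exact hcon ⟨Ob x, hx, hxq⟩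

lemma isOpen_Ob (x : L) : IsOpen (Ob x) := ⟨x, rfl⟩

lemma isOpen_iff_Ob {V : Set (Pt L)} : IsOpen V ↔ ∃ x : L, V = Ob x := Iff.rfl

lemma Ob_mono {x y : L} (h : x ≤ y) : Ob x ⊆ Ob (y : L) :=
  fun _ hq hle => hq (h.trans hle)

lemma Ob_le (hcont : UpContinuousLat L) (hdist : DistribLat L) {x y : L}
    (h : Ob x ⊆ Ob y) : x ≤ y := by
  by_contra hxy
  obtain ⟨p, hp, hpt, hyp, hxp⟩ := exists_prime_sep hcont hdist hxy
  exact (h (show (⟨p, hp, hpt⟩ : Pt L) ∈ Ob x from hxp)) hyp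

lemma Ob_inj (hcont : UpContinuousLat L) (hdist : DistribLat L) {x y : L}
    (h : Ob x = Ob (y : L)) : x = y :=
  le_antisymm (Ob_le hcont hdist h.le) (Ob_le hcont hdist h.ge)

lemma Ob_nonempty (hcont : UpContinuousLat L) (hdist : DistribLat L) {x : L}
    (hx : x ≠ ⊥) : (Ob x).Nonempty := by
  have hb : ¬ x ≤ (⊥ : L) := fun hle => hx (le_bot_iff.1 hle)
  obtain ⟨p, hp, hpt, _, hxp⟩ := exists_prime_sep hcont hdist hb
  exact ⟨⟨p, hp, hpt⟩, hxp⟩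

lemma closure_pt (q : Pt L) : closure {q} = (Ob q.1)ᶜ := by
  apply Set.Subset.antisymm
  · apply closure_minimal
    · intro r hr
      rw [Set.mem_singleton_iff] at hr
      subst hr
      exact fun hq => hq le_rfl
    · exact (isOpen_Ob q.1).isClosed_compl
  · intro r hr
    have hqr : q.1 ≤ r.1 := not_not.1 hr
    rw [mem_closure_iff]
    rintro V ⟨x, rfl⟩ hrV
    exact ⟨q, show ¬ x ≤ q.1 from fun hx => hrV (hx.trans hqr), rfl⟩

end S7

/-- If in every σ-centered locally compact sober space the intersection of
any family of at most κ dense open sets is nonempty, then for every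
downwards-σ-centered upwards-continuous distributive complete lattice L and every set D
of at most κ non-zero divisors there is an irreducible p with no element of D below p. -/
theorem statement7 (κ : Cardinal)
    (h : ∀ (X : Type) [TopologicalSpace X], SigmaCenteredSpace X → LocCompactSp X →
      SoberSp X → ∀ 𝒟 : Set (Set X), Cardinal.mk ↥𝒟 ≤ κ →
        (∀ O ∈ 𝒟, IsOpen O ∧ Dense O) → (⋂₀ 𝒟).Nonempty)
    (L : Type) [CompleteLattice L]
    (hsc : DownSigmaCentered L) (hcont : UpContinuousLat L) (hdist : DistribLat L)
    (D : Set L) (hcard : Cardinal.mk ↥D ≤ κ) (hD : ∀ d ∈ D, IsNZDiv d) :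
    ∃ p : L, IrredElem p ∧ ∀ d ∈ D, ¬ d ≤ p := by
  classical
  -- T0
  have hT0 : T0Space (S7.Pt L) := by
    refine ⟨fun a b hab => ?_⟩
    have h1 := (inseparable_iff_forall_isOpen.1 hab) (S7.Ob a.1) (S7.isOpen_Ob _)
    have h2 := (inseparable_iff_forall_isOpen.1 hab) (S7.Ob b.1) (S7.isOpen_Ob _)
    have hb1 : b ∉ S7.Ob a.1 := fun hb => (h1.2 hb) le_rfl
    have ha2 : a ∉ S7.Ob b.1 := fun ha => (h2.1 ha) le_rfl
    exact Subtype.ext (le_antisymm (not_not.1 hb1) (not_not.1 ha2))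
  -- Sober
  have hsober : SoberSp (S7.Pt L) := by
    refine ⟨hT0, ?_⟩
    rintro C ⟨hCclosed, hCne, hCirr⟩
    obtain ⟨x, hx⟩ : ∃ x : L, Cᶜ = S7.Ob x := hCclosed.isOpen_compl
    have hC : C = (S7.Ob x)ᶜ := by rw [← hx, compl_compl]
    have hxt : x ≠ ⊤ := by
      rintro rfl
      obtain ⟨q, hq⟩ := hCne
      rw [hC] at hq
      exact q.2.2 (top_le_iff.1 (not_not.1 hq))
    have hxprime : S7.IsPrime x := by
      intro a b hab
      by_contra hcon
      push_neg at hcon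
      have hsplit : C = (S7.Ob (x ⊔ a))ᶜ ∪ (S7.Ob (x ⊔ b))ᶜ := by
        rw [hC]
        ext q
        simp only [Set.mem_compl_iff, Set.mem_union, S7.Ob, Set.mem_setOf_eq, not_not]
        constructor
        · intro hxq
          rcases q.2.1 a b (le_trans hab hxq) with h' | h'
          · exact Or.inl (sup_le hxq h')
          · exact Or.inr (sup_le hxq h')
        · rintro (h' | h')
          · exact le_sup_left.trans h'
          · exact le_sup_left.trans h'
      rcases hCirr _ _ ((S7.isOpen_Ob _).isClosed_compl) ((S7.isOpen_Ob _).isClosed_compl)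
          hsplit with h' | h'
      · rw [hC] at h'
        have hxa : x = x ⊔ a := S7.Ob_inj hcont hdist (compl_inj_iff.1 h')
        exact hcon.1 (by rw [hxa]; exact le_sup_right)
      · rw [hC] at h'
        have hxb : x = x ⊔ b := S7.Ob_inj hcont hdist (compl_inj_iff.1 h')
        exact hcon.2 (by rw [hxb]; exact le_sup_right)
    refine ⟨(⟨x, hxprime, hxt⟩ : S7.Pt L), ?_⟩
    rw [hC]; exact (S7.closure_pt (⟨x, hxprime, hxt⟩ : S7.Pt L)).symm
  -- Locally compact
  have hlc : LocCompactSp (S7.Pt L) := by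
    rintro V ⟨y, rfl⟩ q hq
    have hstep : ∃ w, WayBelow w y ∧ ¬ w ≤ q.1 := by
      by_contra hcon
      push_neg at hcon
      exact hq (by rw [← (hcont y).2]; exact sSup_le fun w hw => hcon w hw)
    obtain ⟨w, hwy, hwq⟩ := hstep
    obtain ⟨u, hu0, huP, huwb⟩ := S7.exists_seq (fun v => WayBelow w v) y hwy
      (fun v hv => by
        obtain ⟨m, h1, h2⟩ := S7.interp hcont hv
        exact ⟨m, h2, h1⟩)
    refine ⟨⋂ n, S7.Ob (u n), S7.Ob w, ?_, S7.isOpen_Ob w, hwq, ?_, ?_⟩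
    · apply isCompact_of_finite_subcover
      intro ι U hU hcover
      choose xf hxf using fun i => (hU i : ∃ x : L, U i = S7.Ob x)
      have hcF : ∃ n, u n ≤ ⨆ i, xf i := by
        by_contra hcon
        push_neg at hcon
        obtain ⟨p, hp, hpt, hcp, hnp⟩ := S7.prime_of_chain hdist u huwb hcon
        have hpK : (⟨p, hp, hpt⟩ : S7.Pt L) ∈ ⋂ n, S7.Ob (u n) :=
          Set.mem_iInter.2 fun n => hnp n
        obtain ⟨i, hi⟩ := Set.mem_iUnion.1 (hcover hpK)
        rw [hxf i] at hi
        exact hi (le_trans (le_iSup xf i) hcp)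
      obtain ⟨n, hn⟩ := hcF
      have hDne : (Set.range (fun t : Finset ι => ⨆ i ∈ t, xf i)).Nonempty :=
        ⟨_, ⟨(∅ : Finset ι), rfl⟩⟩
      have hDdir : DirectedOn (· ≤ ·) (Set.range (fun t : Finset ι => ⨆ i ∈ t, xf i)) := by
        rintro _ ⟨t1, rfl⟩ _ ⟨t2, rfl⟩
        exact ⟨_, ⟨t1 ∪ t2, rfl⟩, biSup_mono (fun i hi => Finset.mem_union_left _ hi),
          biSup_mono (fun i hi => Finset.mem_union_right _ hi)⟩
      have hsupD : u n ≤ sSup (Set.range (fun t : Finset ι => ⨆ i ∈ t, xf i)) := by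
        rw [sSup_range]
        exact hn.trans (le_of_eq (iSup_eq_iSup_finset xf))
      obtain ⟨d, ⟨t, rfl⟩, hud⟩ := huwb n _ hDne hDdir hsupD
      refine ⟨t, fun q' hq' => ?_⟩
      have h1 : ¬ u (n+1) ≤ q'.1 := Set.mem_iInter.1 hq' (n+1)
      have h3 : ∃ i ∈ t, ¬ xf i ≤ q'.1 := by
        by_contra hcon
        push_neg at hcon
        exact h1 (hud.trans (iSup₂_le hcon))
      obtain ⟨i, hit, hi⟩ := h3
      exact Set.mem_iUnion₂.2 ⟨i, hit, by rw [hxf i]; exact hi⟩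
    · intro q' hq'
      exact Set.mem_iInter.2 fun n => fun hle => hq' ((S7.wayBelow_le (huP n)).trans hle)
    · intro q' hq'
      have := Set.mem_iInter.1 hq' 0
      rwa [hu0] at this
  -- σ-centered
  have hsigma : SigmaCenteredSpace (S7.Pt L) := by
    obtain ⟨C, hCc, hCu⟩ := hsc
    let φ : NonBot L → NonemptyOpens (S7.Pt L) := fun x =>
      ⟨S7.Ob x.1, S7.isOpen_Ob _, S7.Ob_nonempty hcont hdist x.2⟩
    have hφinj : Function.Injective φ := fun a b hab =>
      Subtype.ext (S7.Ob_inj hcont hdist (congrArg Subtype.val hab))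
    refine ⟨fun n => φ '' C n, fun n F hF hFfin => ?_, ?_⟩
    · have hGfin : (C n ∩ φ ⁻¹' F).Finite :=
        Set.Finite.subset (hFfin.preimage (hφinj.injOn)) Set.inter_subset_right
      obtain ⟨z, hz⟩ := hCc n (C n ∩ φ ⁻¹' F) Set.inter_subset_left hGfin
      refine ⟨φ z, fun V hV => ?_⟩
      obtain ⟨x, hxC, rfl⟩ := hF hV
      have hxz : z.1 ≤ x.1 := hz x ⟨hxC, hV⟩
      show (φ z).1 ⊆ (φ x).1
      exact S7.Ob_mono hxz
    · ext V
      simp only [Set.mem_iUnion, Set.mem_univ, iff_true]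
      obtain ⟨x, hVx⟩ := (V.2.1 : ∃ x : L, V.1 = S7.Ob x)
      have hxbot : x ≠ ⊥ := by
        rintro rfl
        obtain ⟨q, hq⟩ := V.2.2
        rw [hVx] at hq
        exact hq bot_le
      have hmem : (⟨x, hxbot⟩ : NonBot L) ∈ ⋃ n, C n := by rw [hCu]; trivial
      obtain ⟨n, hn⟩ := Set.mem_iUnion.1 hmem
      exact ⟨n, ⟨⟨x, hxbot⟩, hn, Subtype.ext hVx.symm⟩⟩
  -- dense opens
  have hdense : ∀ d ∈ D, Dense (S7.Ob d : Set (S7.Pt L)) := by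
    intro d hd
    rw [dense_iff_inter_open]
    rintro U ⟨y, rfl⟩ hUne
    have hy : y ≠ ⊥ := by
      rintro rfl
      obtain ⟨q, hq⟩ := hUne
      exact hq bot_le
    have hyd : y ⊓ d ≠ ⊥ := by
      rw [inf_comm]
      exact hD d hd y hy
    rw [← S7.Ob_inf]
    exact S7.Ob_nonempty hcont hdist hyd
  -- apply h
  have hcard' : Cardinal.mk ↥((fun d : L => (S7.Ob d : Set (S7.Pt L))) '' D) ≤ κ :=
    le_trans Cardinal.mk_image_le hcard
  have hprops : ∀ V ∈ (fun d : L => (S7.Ob d : Set (S7.Pt L))) '' D, IsOpen V ∧ Dense V := by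
    rintro _ ⟨d, hd, rfl⟩
    exact ⟨S7.isOpen_Ob _, hdense d hd⟩
  obtain ⟨q, hq⟩ := h (S7.Pt L) hsigma hlc hsober _ hcard' hprops
  refine ⟨q.1, ?_, ?_⟩
  · intro a b hab
    rcases q.2.1 a b hab.ge with h' | h'
    · exact Or.inl (le_antisymm (hab.le.trans inf_le_left) h')
    · exact Or.inr (le_antisymm (hab.le.trans inf_le_right) h')
  · intro d hd hle
    exact (Set.mem_sInter.1 hq _ ⟨d, hd, rfl⟩) hle
end

section
/- Let κ be a cardinal. Suppose that for every downwards-σ-centered upwards-continuous distributive complete lattice L and every set D of at most κ non-zero divisors of L there is an irreducible element p ∈ L such that no element of D is below p. Then in every σ-centered core compact topological space, for any family 𝒟 of at most κ dense open sets there is an irreducible subset meeting every member of 𝒟. -/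
open TopologicalSpace in
lemma aux_directed_bound {L : Type} [Preorder L] {D : Set L} (hne : D.Nonempty)
    (hdir : DirectedOn (· ≤ ·) D) :
    ∀ F : Set L, F.Finite → F ⊆ D → ∃ d ∈ D, ∀ x ∈ F, x ≤ d := by
  intro F hfin
  refine Set.Finite.induction_on (motive := fun F _ => F ⊆ D → ∃ d ∈ D, ∀ x ∈ F, x ≤ d) F hfin
    (fun _ => ?_) (fun {a s} ha hs ih hsub => ?_)
  · obtain ⟨d, hd⟩ := hne; exact ⟨d, hd, fun x hx => hx.elim⟩
  · obtain ⟨d, hd, hdb⟩ := ih (fun x hx => hsub (Set.mem_insert_of_mem _ hx))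
    obtain ⟨e, he, hae, hde⟩ := hdir a (hsub (Set.mem_insert _ _)) d hd
    refine ⟨e, he, fun x hx => ?_⟩
    rcases hx with rfl | hx
    · exact hae
    · exact (hdb x hx).trans hde

open TopologicalSpace in
lemma aux_cover_bound {X : Type} [TopologicalSpace X] {D : Set (Opens X)}
    (hne : D.Nonempty) (hdir : DirectedOn (· ≤ ·) D) :
    ∀ 𝒻 : Set (Set X), 𝒻.Finite → 𝒻 ⊆ (fun U : Opens X => (U : Set X)) '' D →
      ∃ d ∈ D, ⋃₀ 𝒻 ⊆ (d : Set X) := by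
  intro 𝒻 hfin
  refine Set.Finite.induction_on
    (motive := fun 𝒻 _ => 𝒻 ⊆ (fun U : TopologicalSpace.Opens X => (U : Set X)) '' D →
      ∃ d ∈ D, ⋃₀ 𝒻 ⊆ (d : Set X)) 𝒻 hfin (fun _ => ?_) (fun {a s} ha hs ih hsub => ?_)
  · obtain ⟨d, hd⟩ := hne
    exact ⟨d, hd, by simp⟩
  · obtain ⟨d, hd, hdb⟩ := ih (fun x hx => hsub (Set.mem_insert_of_mem _ hx))
    obtain ⟨e, he, hea⟩ := hsub (Set.mem_insert _ _)
    obtain ⟨f, hf, hef, hdf⟩ := hdir e he d hd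
    refine ⟨f, hf, ?_⟩
    rw [Set.sUnion_insert]
    exact Set.union_subset (hea ▸ (hef : (e:Set X) ⊆ f)) (hdb.trans (hdf : (d:Set X) ⊆ f))

open TopologicalSpace in
lemma aux_compactIn_wayBelow {X : Type} [TopologicalSpace X] {U V : Opens X}
    (h : CompactIn (U : Set X) (V : Set X)) : WayBelow U V := by
  intro D hne hdir hle
  have hcov : (V : Set X) ⊆ ⋃₀ ((fun U : Opens X => (U : Set X)) '' D) := by
    rw [Set.sUnion_image]
    intro x hx
    have := hle hx
    rw [← SetLike.mem_coe, Opens.coe_sSup] at this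
    exact this
  obtain ⟨𝒻, h𝒻sub, h𝒻fin, h𝒻cov⟩ := h _ (by rintro W ⟨w, _, rfl⟩; exact w.isOpen) hcov
  obtain ⟨d, hd, hdb⟩ := aux_cover_bound hne hdir 𝒻 h𝒻fin h𝒻sub
  exact ⟨d, hd, h𝒻cov.trans hdb⟩

open TopologicalSpace in
lemma aux_wayBelow_le {L : Type} [CompleteLattice L] {x y : L} (h : WayBelow x y) : x ≤ y := by
  obtain ⟨d, hd, hxd⟩ := h {y} ⟨y, rfl⟩
    (fun a ha b hb => ⟨y, rfl, ha ▸ le_refl _, hb ▸ le_refl _⟩) (by simp)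
  rw [Set.mem_singleton_iff] at hd
  exact hd ▸ hxd

lemma aux_wayBelow_sup {L : Type} [CompleteLattice L] {x₁ x₂ y : L}
    (h₁ : WayBelow x₁ y) (h₂ : WayBelow x₂ y) : WayBelow (x₁ ⊔ x₂) y := by
  intro D hne hdir hle
  obtain ⟨d₁, hd₁, hx₁⟩ := h₁ D hne hdir hle
  obtain ⟨d₂, hd₂, hx₂⟩ := h₂ D hne hdir hle
  obtain ⟨d, hd, h₁d, h₂d⟩ := hdir d₁ hd₁ d₂ hd₂
  exact ⟨d, hd, sup_le (hx₁.trans h₁d) (hx₂.trans h₂d)⟩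

open TopologicalSpace in
lemma aux_upcont (X : Type) [TopologicalSpace X] (hcc : CoreCompact X) :
    UpContinuousLat (Opens X) := by
  intro y
  constructor
  · intro a ha b hb
    exact ⟨a ⊔ b, aux_wayBelow_sup ha hb, le_sup_left, le_sup_right⟩
  · apply le_antisymm
    · exact sSup_le fun x hx => aux_wayBelow_le hx
    · intro x hx
      have := hcc (y : Set X) y.isOpen
      have hx' : x ∈ ⋃₀ {O' : Set X | IsOpen O' ∧ CompactIn O' (y : Set X)} := this ▸ hx
      obtain ⟨O', ⟨hO'op, hO'c⟩, hxO'⟩ := hx'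
      have hwb : WayBelow (⟨O', hO'op⟩ : Opens X) y := aux_compactIn_wayBelow hO'c
      have : (⟨O', hO'op⟩ : Opens X) ≤ sSup {x : Opens X | WayBelow x y} := le_sSup hwb
      exact this hxO'

open TopologicalSpace in
lemma aux_downsc (X : Type) [TopologicalSpace X] (hsc : SigmaCenteredSpace X) :
    DownSigmaCentered (Opens X) := by
  obtain ⟨C, hcent, huniv⟩ := hsc
  refine ⟨fun n => {u : NonBot (Opens X) |
    (⟨(u.1 : Set X), u.1.isOpen, (Opens.ne_bot_iff_nonempty u.1).1 u.2⟩ : NonemptyOpens X) ∈ C n},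
    ?_, ?_⟩
  · intro n F hF hfin
    set φ : NonBot (Opens X) → NonemptyOpens X :=
      fun u => ⟨(u.1 : Set X), u.1.isOpen, (Opens.ne_bot_iff_nonempty u.1).1 u.2⟩ with hφ
    obtain ⟨z, hz⟩ := hcent n (φ '' F) (by rintro w ⟨u, hu, rfl⟩; exact hF hu) (hfin.image φ)
    refine ⟨⟨⟨z.1, z.2.1⟩, (Opens.ne_bot_iff_nonempty _).2 z.2.2⟩, fun u hu => ?_⟩
    exact hz (φ u) ⟨u, hu, rfl⟩
  · ext u
    simp only [Set.mem_iUnion, Set.mem_univ, iff_true]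
    have := huniv
    have hmem : (⟨(u.1 : Set X), u.1.isOpen, (Opens.ne_bot_iff_nonempty u.1).1 u.2⟩ :
        NonemptyOpens X) ∈ ⋃ n, C n := this ▸ Set.mem_univ _
    obtain ⟨n, hn⟩ := Set.mem_iUnion.1 hmem
    exact ⟨n, hn⟩

open TopologicalSpace in
lemma aux_closure_irred {X : Type} [TopologicalSpace X] (x : X) : IrredSet (closure {x}) := by
  refine ⟨isClosed_closure, ⟨x, subset_closure rfl⟩, fun A B hA hB hEq => ?_⟩
  have hx : x ∈ A ∪ B := hEq ▸ subset_closure rfl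
  rcases hx with hx | hx
  · exact Or.inl (Set.Subset.antisymm (closure_minimal (Set.singleton_subset_iff.2 hx) hA)
      (by rw [hEq]; exact Set.subset_union_left))
  · exact Or.inr (Set.Subset.antisymm (closure_minimal (Set.singleton_subset_iff.2 hx) hB)
      (by rw [hEq]; exact Set.subset_union_right))

/-- If for every downwards-σ-centered upwards-continuous distributive
complete lattice L and every set of at most κ non-zero divisors there is an irreducible
element below none of them, then in every σ-centered core compact space, for any family
of at most κ dense open sets there is an irreducible subset meeting every member. -/
theorem statement8 (κ : Cardinal)
    (h : ∀ (L : Type) [CompleteLattice L], DownSigmaCentered L → UpContinuousLat L →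
      DistribLat L → ∀ D : Set L, Cardinal.mk ↥D ≤ κ → (∀ d ∈ D, IsNZDiv d) →
        ∃ p : L, IrredElem p ∧ ∀ d ∈ D, ¬ d ≤ p)
    (X : Type) [TopologicalSpace X] (hsc : SigmaCenteredSpace X) (hcc : CoreCompact X)
    (𝒟 : Set (Set X)) (hcard : Cardinal.mk ↥𝒟 ≤ κ)
    (hdo : ∀ O ∈ 𝒟, IsOpen O ∧ Dense O) :
    ∃ C : Set X, IrredSet C ∧ ∀ O ∈ 𝒟, (C ∩ O).Nonempty := by
  classical
  rcases Set.eq_empty_or_nonempty 𝒟 with h𝒟 | h𝒟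
  · -- empty family: use the closure of any point; X is nonempty by σ-centeredness
    obtain ⟨C0, hcent, _⟩ := hsc
    obtain ⟨z, _⟩ := hcent 0 ∅ (Set.empty_subset _) Set.finite_empty
    obtain ⟨x, _⟩ := z.2.2
    exact ⟨closure {x}, aux_closure_irred x, fun O hO => (h𝒟 ▸ hO).elim⟩
  · set L := TopologicalSpace.Opens X
    set D : Set L := {U : L | (U : Set X) ∈ 𝒟} with hD
    have hcard' : Cardinal.mk ↥D ≤ κ := by
      refine le_trans (Cardinal.mk_le_of_injective (f := fun U : ↥D => (⟨(U.1 : Set X), U.2⟩ : ↥𝒟)) ?_) hcard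
      intro a b hab
      exact Subtype.ext (TopologicalSpace.Opens.ext (congrArg Subtype.val hab))
    have hdistrib : DistribLat L := fun a b c => ⟨inf_sup_left a b c, sup_inf_left a b c⟩
    have hnz : ∀ d ∈ D, IsNZDiv d := by
      intro d hd y hy
      have hy' := (TopologicalSpace.Opens.ne_bot_iff_nonempty y).1 hy
      obtain ⟨x, hx1, hx2⟩ := (hdo _ hd).2.inter_open_nonempty (y : Set X) y.isOpen hy'
      exact (TopologicalSpace.Opens.ne_bot_iff_nonempty _).2 ⟨x, hx2, hx1⟩
    obtain ⟨p, hpirr, hpD⟩ := h L (aux_downsc X hsc) (aux_upcont X hcc) hdistrib D hcard' hnz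
    have hpne : p ≠ ⊤ := by
      obtain ⟨O, hO⟩ := h𝒟
      intro hptop
      exact hpD ⟨O, (hdo O hO).1⟩ hO (hptop ▸ le_top)
    refine ⟨((p : Set X))ᶜ, ⟨p.isOpen.isClosed_compl, ?_, ?_⟩, ?_⟩
    · rw [Set.nonempty_compl]
      intro huniv
      exact hpne (TopologicalSpace.Opens.ext (huniv.trans (TopologicalSpace.Opens.coe_top).symm))
    · intro A B hA hB hEq
      have hpab : p = (⟨Aᶜ, hA.isOpen_compl⟩ : L) ⊓ ⟨Bᶜ, hB.isOpen_compl⟩ := by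
        apply TopologicalSpace.Opens.ext
        have : (p : Set X) = (A ∪ B)ᶜ := by rw [← hEq, compl_compl]
        rw [this, Set.compl_union]; rfl
      rcases hpirr _ _ hpab with hp | hp
      · left
        have : (p : Set X) = Aᶜ := congrArg SetLike.coe hp
        rw [this, compl_compl]
      · right
        have : (p : Set X) = Bᶜ := congrArg SetLike.coe hp
        rw [this, compl_compl]
    · intro O hO
      have hnle := hpD ⟨O, (hdo O hO).1⟩ hO
      have : ¬ O ⊆ (p : Set X) := hnle
      obtain ⟨x, hxO, hxp⟩ := Set.not_subset.1 this
      exact ⟨x, hxp, hxO⟩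
end

section
/- Let κ be a cardinal. Suppose that in every σ-centered core compact topological space, for any family 𝒟 of at most κ dense open sets there is an irreducible subset meeting every member of 𝒟. Then κ < 𝔭. -/
/-!
The Cohen poset shows that the infimum defining 𝔭 is attained: there are a nonempty
upwards-σ-centered poset `P` and `𝔭` cofinal subsets `D` of it that no directed subset meets
entirely. Give `P` the Alexandrov topology, whose open sets are the upper sets. It is σ-centered
because `P` is, core compact because every point has a least open neighbourhood, and the upper
closures of the members of `D` are dense open sets. An irreducible closed set is a lower set,
and irreducibility makes it directed; meeting the upper closure of each `d ∈ D`, it meets each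
`d`. So `𝔭 ≤ κ` is impossible.
-/

open Set Topology

theorem IrredSet.isIrreducible {X : Type} [TopologicalSpace X] {C : Set X} (hC : IrredSet C) :
    IsIrreducible C := by
  obtain ⟨hclosed, hne, hirr⟩ := hC
  refine ⟨hne, isPreirreducible_iff_isClosed_union_isClosed.2 fun A B hA hB hAB => ?_⟩
  have hsplit : C = C ∩ A ∪ C ∩ B := by rw [← inter_union_distrib_left, inter_eq_left.2 hAB]
  exact (hirr _ _ (hclosed.inter hA) (hclosed.inter hB) hsplit).imp
    (fun h => inter_eq_left.1 h.symm) (fun h => inter_eq_left.1 h.symm)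

theorem CompactIn.subset {X : Type} [TopologicalSpace X] {U V : Set X} (hV : IsOpen V)
    (hUV : CompactIn U V) : U ⊆ V := by
  obtain ⟨𝒻, h𝒻, -, hU⟩ := hUV {V} (by simpa using hV) (by simp)
  exact hU.trans (sUnion_subset fun W hW => (h𝒻 hW).symm ▸ subset_rfl)

theorem AlexandrovDiscrete.coreCompact (X : Type) [TopologicalSpace X] [AlexandrovDiscrete X] :
    CoreCompact X := by
  intro O hO
  refine (subset_antisymm ?_ (sUnion_subset fun O' hO' => hO'.2.subset hO))
  intro x hx
  refine ⟨nhdsKer {x}, ⟨isOpen_nhdsKer, fun 𝒞 h𝒞 hcover => ?_⟩, subset_nhdsKer rfl⟩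
  obtain ⟨W, hW𝒞, hxW⟩ := hcover hx
  exact ⟨{W}, singleton_subset_iff.2 hW𝒞, finite_singleton W,
    (nhdsKer_singleton_subset_iff_mem_nhds.2 ((h𝒞 W hW𝒞).mem_nhds hxW)).trans (by simp)⟩

theorem UpSigmaCentered.of_countable (P : Type) [PartialOrder P] [Nonempty P] [Countable P] :
    UpSigmaCentered P := by
  obtain ⟨e, he⟩ := exists_surjective_nat P
  refine ⟨fun n => {e n}, fun n F hF _ => ⟨e n, fun x hx => (hF hx).le⟩, ?_⟩
  exact eq_univ_of_forall fun p => mem_iUnion.2 ((he p).imp fun n hn => hn.symm)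

namespace Topology.IsUpperSet

section Preorder

variable {P : Type} [Preorder P] [TopologicalSpace P] [Topology.IsUpperSet P]

theorem isOpen_Ici (a : P) : IsOpen (Ici a) :=
  isOpen_iff_isUpperSet.2 (isUpperSet_Ici a)

theorem isOpen_upperClosure (d : Set P) : IsOpen (upperClosure d : Set P) :=
  isOpen_iff_isUpperSet.2 (upperClosure d).upper

theorem _root_.IsPreirreducible.directedOn {C : Set P} (hC : IsPreirreducible C) :
    DirectedOn (· ≤ ·) C := fun p hp q hq => by
  obtain ⟨r, hrC, hpr, hqr⟩ :=
    hC (Ici p) (Ici q) (isOpen_Ici p) (isOpen_Ici q) ⟨p, hp, self_mem_Ici⟩ ⟨q, hq, self_mem_Ici⟩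
  exact ⟨r, hrC, hpr, hqr⟩

theorem _root_.IsClosed.inter_nonempty_of_inter_upperClosure {C d : Set P} (hC : IsClosed C)
    (h : (C ∩ upperClosure d).Nonempty) : (C ∩ d).Nonempty := by
  obtain ⟨c, hc, p, hp, hpc⟩ := h
  exact ⟨p, isClosed_iff_isLower.1 hC hpc hc, hp⟩

end Preorder

variable {P : Type} [PartialOrder P] [TopologicalSpace P] [Topology.IsUpperSet P]

theorem sigmaCenteredSpace (hP : UpSigmaCentered P) : SigmaCenteredSpace P := by
  obtain ⟨C, hcent, hcover⟩ := hP
  have : Nonempty P := let ⟨z, _⟩ := hcent 0 ∅ (empty_subset _) finite_empty; ⟨z⟩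
  refine ⟨fun n => {U : NonemptyOpens P | (U.1 ∩ C n).Nonempty}, fun n F hF hFfin => ?_, ?_⟩
  · have hF' : ∀ U ∈ F, ∃ x, x ∈ U.1 ∩ C n := hF
    choose! pick hpick using hF'
    obtain ⟨z, hz⟩ := hcent n (pick '' F) (image_subset_iff.2 fun U hU => (hpick U hU).2)
      (hFfin.image pick)
    refine ⟨⟨Ici z, isOpen_Ici z, z, self_mem_Ici⟩, fun U hU y hy => ?_⟩
    exact isOpen_iff_isUpperSet.1 U.2.1 ((hz _ (mem_image_of_mem pick hU)).trans hy)
      (hpick U hU).1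
  · refine eq_univ_of_forall fun U => ?_
    obtain ⟨x, hx⟩ := U.2.2
    obtain ⟨n, hn⟩ := mem_iUnion.1 (hcover.symm ▸ mem_univ x : x ∈ ⋃ n, C n)
    exact mem_iUnion.2 ⟨n, x, hx, hn⟩

theorem dense_upperClosure {d : Set P} (hd : IsCofinalIn d) : Dense (upperClosure d : Set P) := by
  refine dense_iff_inter_open.2 fun U hU ⟨x, hx⟩ => ?_
  obtain ⟨q, hqd, hxq⟩ := hd x
  exact ⟨q, isOpen_iff_isUpperSet.1 hU hxq hx, subset_upperClosure hqd⟩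

end Topology.IsUpperSet

abbrev CohenPoset : Type := {p : Finset ℕ × Finset ℕ // Disjoint p.1 p.2}

instance : Nonempty CohenPoset := ⟨⟨(∅, ∅), Finset.disjoint_empty_left ∅⟩⟩

/-- The conditions `p` that contradict `s`, reading `p.1` as elements of `s` and `p.2` as
non-elements. -/
def CohenPoset.incompatible (s : Set ℕ) : Set CohenPoset :=
  {p | ¬ ((p.1.1 : Set ℕ) ⊆ s ∧ Disjoint (p.1.2 : Set ℕ) s)}

theorem CohenPoset.isCofinalIn_incompatible (s : Set ℕ) : IsCofinalIn (incompatible s) := by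
  intro p
  obtain ⟨n, hn⟩ := Infinite.exists_notMem_finset (p.1.1 ∪ p.1.2)
  rw [Finset.mem_union, not_or] at hn
  by_cases hns : n ∈ s
  · refine ⟨⟨(p.1.1, insert n p.1.2), Finset.disjoint_insert_right.2 ⟨hn.1, p.2⟩⟩,
      fun h => Set.disjoint_left.1 h.2 (by simp) hns, subset_rfl, Finset.subset_insert _ _⟩
  · refine ⟨⟨(insert n p.1.1, p.1.2), Finset.disjoint_insert_left.2 ⟨hn.2, p.2⟩⟩,
      fun h => hns (h.1 (by simp)), Finset.subset_insert _ _, subset_rfl⟩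

theorem CohenPoset.not_exists_directedOn_meets_incompatible :
    ¬ ∃ S : Set CohenPoset, DirectedOn (· ≤ ·) S ∧
      ∀ d ∈ range incompatible, (S ∩ d).Nonempty := by
  rintro ⟨S, hS, hmeet⟩
  obtain ⟨p, hpS, hp⟩ := hmeet _ (mem_range_self (⋃ q ∈ S, (q.1.1 : Set ℕ)))
  refine hp ⟨subset_biUnion_of_mem (u := fun q : CohenPoset => (q.1.1 : Set ℕ)) hpS,
    Set.disjoint_right.2 fun n hn hnp => ?_⟩
  obtain ⟨q, hqS, hnq⟩ := mem_iUnion₂.1 hn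
  obtain ⟨r, -, hpr, hqr⟩ := hS p hpS q hqS
  exact Finset.disjoint_left.1 r.2 (hqr.1 hnq) (hpr.2 hnp)

theorem CohenPoset.pWitness : PWitness (Cardinal.mk (range incompatible)) := by
  refine ⟨CohenPoset, inferInstance, inferInstance, UpSigmaCentered.of_countable _,
    range incompatible, rfl, ?_, not_exists_directedOn_meets_incompatible⟩
  rintro _ ⟨s, rfl⟩
  exact isCofinalIn_incompatible s

theorem pWitness_cardP : PWitness cardP :=
  csInf_mem (s := {κ | PWitness κ}) ⟨_, CohenPoset.pWitness⟩

/-- If in every σ-centered core compact space, for any family of at most κ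
dense open sets there is an irreducible subset meeting every member, then κ < 𝔭. -/
theorem statement9 (κ : Cardinal)
    (h : ∀ (X : Type) [TopologicalSpace X], SigmaCenteredSpace X → CoreCompact X →
      ∀ 𝒟 : Set (Set X), Cardinal.mk ↥𝒟 ≤ κ → (∀ O ∈ 𝒟, IsOpen O ∧ Dense O) →
        ∃ C : Set X, IrredSet C ∧ ∀ O ∈ 𝒟, (C ∩ O).Nonempty) :
    κ < cardP := by
  by_contra! hle
  obtain ⟨P, _, -, hσ, D, hD, hcof, hnot⟩ := pWitness_cardP
  let := Topology.upperSet P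
  obtain ⟨C, hC, hmeet⟩ := h P (IsUpperSet.sigmaCenteredSpace hσ)
    (AlexandrovDiscrete.coreCompact P) ((fun d => (upperClosure d : Set P)) '' D)
    (Cardinal.mk_image_le.trans (hD ▸ hle)) (by
      rintro _ ⟨d, hd, rfl⟩
      exact ⟨IsUpperSet.isOpen_upperClosure d, IsUpperSet.dense_upperClosure (hcof d hd)⟩)
  exact hnot ⟨C, hC.isIrreducible.isPreirreducible.directedOn, fun d hd =>
    hC.1.inter_nonempty_of_inter_upperClosure (hmeet _ (mem_image_of_mem _ hd))⟩
end

section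
/- Let X be a topological space and let S be a filter of open sets of X (a nonempty collection of nonempty open sets closed under finite intersections and under open supersets) such that for every O ∈ S there exists O' ∈ S with O' compact in O. Then S is Scott open: whenever 𝒟 is a collection of open sets directed upward under inclusion with ⋃𝒟 ∈ S, some element of 𝒟 belongs to S. -/
/-- aux -/
lemma dir_finite_bound {X : Type} (𝒟 : Set (Set X)) (hdir : DirectedOn (· ⊆ ·) 𝒟)
    (𝒻 : Set (Set X)) (h𝒻 : 𝒻 ⊆ 𝒟) (hfin : 𝒻.Finite) (hne : 𝒻.Nonempty) :
    ∃ W ∈ 𝒟, ⋃₀ 𝒻 ⊆ W := by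
  revert h𝒻 hne
  refine Set.Finite.induction_on 𝒻 hfin (fun _ hne => absurd hne (by simp)) ?_
  intro a s ha hs ih h𝒻 hne
  · rcases s.eq_empty_or_nonempty with rfl | hsne
    · exact ⟨a, h𝒻 (Set.mem_insert _ _), by simp⟩
    · obtain ⟨W, hW, hsub⟩ := ih (fun x hx => h𝒻 (Set.mem_insert_of_mem _ hx)) hsne
      obtain ⟨Z, hZ, hZ1, hZ2⟩ := hdir a (h𝒻 (Set.mem_insert _ _)) W hW
      exact ⟨Z, hZ, by
        rw [Set.sUnion_insert]
        exact Set.union_subset hZ1 (hsub.trans hZ2)⟩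


/-- A filter S of open sets such that every member contains (in the
compact-in sense) another member is Scott open. -/
theorem statement15 (X : Type) [TopologicalSpace X] (S : Set (Set X))
    (hne : S.Nonempty)
    (hmem : ∀ U ∈ S, IsOpen U ∧ U.Nonempty)
    (hinter : ∀ U ∈ S, ∀ V ∈ S, U ∩ V ∈ S)
    (hup : ∀ U ∈ S, ∀ V : Set X, IsOpen V → U ⊆ V → V ∈ S)
    (hcpt : ∀ O ∈ S, ∃ O' ∈ S, CompactIn O' O)
    (𝒟 : Set (Set X)) (hopen : ∀ W ∈ 𝒟, IsOpen W)
    (hdir : DirectedOn (· ⊆ ·) 𝒟) (hU : ⋃₀ 𝒟 ∈ S) :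
    ∃ W ∈ 𝒟, W ∈ S := by
  obtain ⟨O', hO'S, hci⟩ := hcpt _ hU
  obtain ⟨𝒻, h𝒻𝒟, hfin, hsub⟩ := hci 𝒟 hopen subset_rfl
  have hne𝒻 : 𝒻.Nonempty := by
    rcases 𝒻.eq_empty_or_nonempty with rfl | h
    · obtain ⟨x, hx⟩ := (hmem _ hO'S).2
      simpa using hsub hx
    · exact h
  obtain ⟨W, hW𝒟, hWsub⟩ := dir_finite_bound 𝒟 hdir 𝒻 h𝒻𝒟 hfin hne𝒻
  exact ⟨W, hW𝒟, hup _ hO'S W (hopen _ hW𝒟) (hsub.trans hWsub)⟩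
end
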